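/- arXiv:math/9803016 — 4 statements merged into one kernel-verified Lean document; each statement's English description precedes it below -/
import Mathlib

section
/- Let t, s ∈ E ⊂ ℝⁿ with t ≠ s, a, b, c > 0, R > 0, and B₁(t,s) = {x ∈ B(0,R) : |x - s| ≤ |x - t|}. If c - a - b + n < 0 and c - b + n > 0, then ∫_{B₁} dist(x,E)^c / (|x - t|^a |x - s|^b) dm(x) ≤ C |t - s|^{c - a - b + n}, where m is Lebesgue measure on ℝⁿ and C depends only on n, a, b, c, R. -/
open MeasureTheory Metric Set Real Filter


lemma integrableOn_rpow_norm_ball {n : ℕ} {p : ℝ} (hp : -(n : ℝ) < p) :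
    IntegrableOn (fun y : EuclideanSpace ℝ (Fin n) => ‖y‖ ^ p) (ball 0 1) := by
  have hfr : Module.finrank ℝ (EuclideanSpace ℝ (Fin n)) = n := finrank_euclideanSpace_fin
  have hmeas : Measurable fun y : EuclideanSpace ℝ (Fin n) => ‖y‖ ^ p := by fun_prop
  rcases le_or_gt 0 p with hp0 | hp0
  · refine Measure.integrableOn_of_bounded measure_ball_lt_top.ne
      hmeas.aestronglyMeasurable (M := 1) ?_
    filter_upwards [ae_restrict_mem measurableSet_ball] with y hy
    rw [Real.norm_eq_abs, abs_of_nonneg (rpow_nonneg (norm_nonneg _) _)]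
    exact Real.rpow_le_one (norm_nonneg _) (le_of_lt (mem_ball_zero_iff.mp hy)) hp0
  · constructor
    · exact hmeas.aestronglyMeasurable.restrict
    · rw [hasFiniteIntegral_iff_ofReal
          (Eventually.of_forall fun y => rpow_nonneg (norm_nonneg _) _),
        lintegral_eq_lintegral_meas_le _
          (Eventually.of_forall fun y => rpow_nonneg (norm_nonneg _) _)
          hmeas.aemeasurable]
      set μ' := volume.restrict (ball (0 : EuclideanSpace ℝ (Fin n)) 1) with hμ'
      set F := fun t : ℝ => μ' {y : EuclideanSpace ℝ (Fin n) | t ≤ ‖y‖ ^ p} with hF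
      have hsub : ∀ t : ℝ, 0 < t → {y : EuclideanSpace ℝ (Fin n) | t ≤ ‖y‖ ^ p} ⊆
          closedBall 0 (t ^ p⁻¹) := by
        intro t ht y hy
        simp only [mem_setOf_eq] at hy
        rcases eq_or_ne y 0 with rfl | hy0
        · simp only [norm_zero, Real.zero_rpow hp0.ne] at hy; linarith
        · have hny : 0 < ‖y‖ := norm_pos_iff.mpr hy0
          rw [mem_closedBall_zero_iff]
          exact (Real.le_rpow_inv_iff_of_neg hny ht hp0).mpr hy
      have hbound2 : ∀ t ∈ Ioi (1 : ℝ), F t ≤ ENNReal.ofReal (t ^ (p⁻¹ * n)) *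
          volume (ball (0 : EuclideanSpace ℝ (Fin n)) 1) := by
        intro t ht
        have ht0 : (0 : ℝ) < t := lt_trans one_pos ht
        calc F t ≤ volume (closedBall (0 : EuclideanSpace ℝ (Fin n)) (t ^ p⁻¹)) :=
              le_trans (measure_mono (hsub t ht0)) (Measure.restrict_le_self _)
          _ = ENNReal.ofReal ((t ^ p⁻¹) ^ Module.finrank ℝ (EuclideanSpace ℝ (Fin n))) *
                volume (ball (0 : EuclideanSpace ℝ (Fin n)) 1) :=
              Measure.addHaar_closedBall _ _ (rpow_nonneg ht0.le _)
          _ = ENNReal.ofReal (t ^ (p⁻¹ * n)) * volume (ball _ 1) := by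
              rw [hfr, ← Real.rpow_natCast (t ^ p⁻¹) n, ← Real.rpow_mul ht0.le]
      have hint2 : (∫⁻ t in Ioi (1 : ℝ), ENNReal.ofReal (t ^ (p⁻¹ * n))) < ⊤ := by
        have hlt : p⁻¹ * n < -1 := by
          rw [inv_mul_eq_div, div_lt_iff_of_neg hp0]
          linarith
        exact (integrableOn_Ioi_rpow_of_lt hlt one_pos).setLIntegral_lt_top
      calc ∫⁻ t in Ioi (0 : ℝ), F t
          ≤ ∫⁻ t in Ioc (0 : ℝ) 1 ∪ Ioi 1, F t := lintegral_mono_set Ioi_subset_Ioc_union_Ioi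
        _ ≤ (∫⁻ t in Ioc (0 : ℝ) 1, F t) + ∫⁻ t in Ioi 1, F t := lintegral_union_le _ _ _
        _ < ⊤ := by
            refine ENNReal.add_lt_top.2 ⟨?_, ?_⟩
            · calc (∫⁻ t in Ioc (0 : ℝ) 1, F t)
                  ≤ ∫⁻ _ in Ioc (0 : ℝ) 1, volume (ball (0 : EuclideanSpace ℝ (Fin n)) 1) := by
                    refine setLIntegral_mono' measurableSet_Ioc fun t _ => ?_
                    calc F t ≤ μ' univ := measure_mono (subset_univ _)
                      _ = volume (ball (0 : EuclideanSpace ℝ (Fin n)) 1) := by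
                          simp [hμ']
                _ = volume (ball (0 : EuclideanSpace ℝ (Fin n)) 1) * volume (Ioc (0:ℝ) 1) :=
                    setLIntegral_const _ _
                _ < ⊤ := ENNReal.mul_lt_top measure_ball_lt_top (by simp)
            · calc (∫⁻ t in Ioi (1 : ℝ), F t)
                  ≤ ∫⁻ t in Ioi (1 : ℝ), ENNReal.ofReal (t ^ (p⁻¹ * n)) *
                      volume (ball (0 : EuclideanSpace ℝ (Fin n)) 1) :=
                    setLIntegral_mono' measurableSet_Ioi hbound2
                _ = (∫⁻ t in Ioi (1 : ℝ), ENNReal.ofReal (t ^ (p⁻¹ * n))) *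
                      volume (ball (0 : EuclideanSpace ℝ (Fin n)) 1) :=
                    lintegral_mul_const' _ _ measure_ball_lt_top.ne
                _ < ⊤ := ENNReal.mul_lt_top hint2 measure_ball_lt_top

lemma integrableOn_rpow_norm_compl_ball {n : ℕ} {p : ℝ} (hp : p < -(n : ℝ)) :
    IntegrableOn (fun y : EuclideanSpace ℝ (Fin n) => ‖y‖ ^ p)
      (ball (0 : EuclideanSpace ℝ (Fin n)) 1)ᶜ := by
  have hfr : Module.finrank ℝ (EuclideanSpace ℝ (Fin n)) = n := finrank_euclideanSpace_fin
  have hp0 : p < 0 := lt_of_lt_of_le hp (by simp)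
  have hmeas : Measurable fun y : EuclideanSpace ℝ (Fin n) => ‖y‖ ^ p := by fun_prop
  constructor
  · exact hmeas.aestronglyMeasurable.restrict
  · rw [hasFiniteIntegral_iff_ofReal
        (Eventually.of_forall fun y => rpow_nonneg (norm_nonneg _) _),
      lintegral_eq_lintegral_meas_le _
        (Eventually.of_forall fun y => rpow_nonneg (norm_nonneg _) _)
        hmeas.aemeasurable]
    set μ' := volume.restrict (ball (0 : EuclideanSpace ℝ (Fin n)) 1)ᶜ with hμ'
    set F := fun t : ℝ => μ' {y : EuclideanSpace ℝ (Fin n) | t ≤ ‖y‖ ^ p} with hF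
    have hsub : ∀ t : ℝ, 0 < t → {y : EuclideanSpace ℝ (Fin n) | t ≤ ‖y‖ ^ p} ⊆
        closedBall 0 (t ^ p⁻¹) := by
      intro t ht y hy
      simp only [mem_setOf_eq] at hy
      rcases eq_or_ne y 0 with rfl | hy0
      · simp only [norm_zero, Real.zero_rpow hp0.ne] at hy; linarith
      · have hny : 0 < ‖y‖ := norm_pos_iff.mpr hy0
        rw [mem_closedBall_zero_iff]
        exact (Real.le_rpow_inv_iff_of_neg hny ht hp0).mpr hy
    have hzero : ∀ t ∈ Ioi (1 : ℝ), F t = 0 := by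
      intro t ht
      simp only [hF, hμ']
      rw [Measure.restrict_apply' measurableSet_ball.compl]
      convert measure_empty (μ := (volume : Measure (EuclideanSpace ℝ (Fin n))))
      ext y
      simp only [mem_inter_iff, mem_setOf_eq, mem_compl_iff, mem_ball_zero_iff, not_lt,
        mem_empty_iff_false, iff_false, not_and]
      intro hty hy1
      have : ‖y‖ ^ p ≤ 1 := Real.rpow_le_one_of_one_le_of_nonpos hy1 hp0.le
      linarith [mem_Ioi.mp ht]
    have hbound : ∀ t ∈ Ioc (0 : ℝ) 1, F t ≤ ENNReal.ofReal (t ^ (p⁻¹ * n)) *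
        volume (ball (0 : EuclideanSpace ℝ (Fin n)) 1) := by
      intro t ht
      calc F t ≤ volume (closedBall (0 : EuclideanSpace ℝ (Fin n)) (t ^ p⁻¹)) :=
            le_trans (measure_mono (hsub t ht.1)) (Measure.restrict_le_self _)
        _ = ENNReal.ofReal ((t ^ p⁻¹) ^ Module.finrank ℝ (EuclideanSpace ℝ (Fin n))) *
              volume (ball (0 : EuclideanSpace ℝ (Fin n)) 1) :=
            Measure.addHaar_closedBall _ _ (rpow_nonneg ht.1.le _)
        _ = ENNReal.ofReal (t ^ (p⁻¹ * n)) * volume (ball _ 1) := by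
            rw [hfr, ← Real.rpow_natCast (t ^ p⁻¹) n, ← Real.rpow_mul ht.1.le]
    have hint : (∫⁻ t in Ioc (0 : ℝ) 1, ENNReal.ofReal (t ^ (p⁻¹ * n))) < ⊤ := by
      have hlt : -1 < p⁻¹ * n := by
        rw [inv_mul_eq_div, lt_div_iff_of_neg hp0]
        linarith
      refine IntegrableOn.setLIntegral_lt_top ?_
      rw [← intervalIntegrable_iff_integrableOn_Ioc_of_le zero_le_one]
      exact intervalIntegral.intervalIntegrable_rpow' hlt
    calc ∫⁻ t in Ioi (0 : ℝ), F t
        ≤ ∫⁻ t in Ioc (0 : ℝ) 1 ∪ Ioi 1, F t := lintegral_mono_set Ioi_subset_Ioc_union_Ioi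
      _ ≤ (∫⁻ t in Ioc (0 : ℝ) 1, F t) + ∫⁻ t in Ioi 1, F t := lintegral_union_le _ _ _
      _ < ⊤ := by
          refine ENNReal.add_lt_top.2 ⟨?_, ?_⟩
          · calc (∫⁻ t in Ioc (0 : ℝ) 1, F t)
                ≤ ∫⁻ t in Ioc (0 : ℝ) 1, ENNReal.ofReal (t ^ (p⁻¹ * n)) *
                    volume (ball (0 : EuclideanSpace ℝ (Fin n)) 1) :=
                  setLIntegral_mono' measurableSet_Ioc hbound
              _ = (∫⁻ t in Ioc (0 : ℝ) 1, ENNReal.ofReal (t ^ (p⁻¹ * n))) *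
                    volume (ball (0 : EuclideanSpace ℝ (Fin n)) 1) :=
                  lintegral_mul_const' _ _ measure_ball_lt_top.ne
              _ < ⊤ := ENNReal.mul_lt_top hint measure_ball_lt_top
          · rw [setLIntegral_congr_fun measurableSet_Ioi (show EqOn F (fun _ => 0) (Ioi 1) from hzero)]
            simp

/-- For a compact set `E ⊆ ℝⁿ`, distinct points `t, s ∈ E`, exponents `a, b, c > 0` with
`c - a - b + n < 0` and `c - b + n > 0`, and `B₁(t,s) = {x ∈ B(0,R) : |x-s| ≤ |x-t|}`,
`∫_{B₁} dist(x,E)^c / (|x-t|^a |x-s|^b) dm(x) ≤ C |t-s|^{c-a-b+n}`, with `C` depending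
only on `n, a, b, c, R`. -/
theorem integral_bound_B1 (n : ℕ) (a b c R : ℝ)
    (ha : 0 < a) (hb : 0 < b) (hc : 0 < c) (hR : 0 < R)
    (h1 : c - a - b + n < 0) (h2 : 0 < c - b + n) :
    ∃ C > (0 : ℝ), ∀ E : Set (EuclideanSpace ℝ (Fin n)), IsCompact E →
      ∀ t ∈ E, ∀ s ∈ E, t ≠ s →
        ∫ x in {x : EuclideanSpace ℝ (Fin n) |
            x ∈ ball (0 : EuclideanSpace ℝ (Fin n)) R ∧ dist x s ≤ dist x t},
          infDist x E ^ c / (dist x t ^ a * dist x s ^ b) ≤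
        C * dist t s ^ (c - a - b + n) := by
  classical
  rcases Nat.eq_zero_or_pos n with hn0 | hn
  · subst hn0
    exact ⟨1, one_pos, fun E _ t _ s _ hts => absurd (Subsingleton.elim t s) hts⟩
  have hfr : Module.finrank ℝ (EuclideanSpace ℝ (Fin n)) = n := finrank_euclideanSpace_fin
  set φ : EuclideanSpace ℝ (Fin n) → ℝ :=
    fun y => if ‖y‖ < 1 then ‖y‖ ^ (c - b) else ‖y‖ ^ (c - a - b) with hφ
  have hφ_nonneg : ∀ y, 0 ≤ φ y := fun y => by
    by_cases h : ‖y‖ < 1 <;> simp [hφ, h, rpow_nonneg (norm_nonneg _)]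
  have hφ_int : Integrable φ := by
    have hb1 : IntegrableOn φ (ball (0 : EuclideanSpace ℝ (Fin n)) 1) := by
      refine (integrableOn_rpow_norm_ball (n := n) (p := c - b) (by linarith)).congr_fun
        (fun y hy => ?_) measurableSet_ball
      simp [hφ, mem_ball_zero_iff.mp hy]
    have hb2 : IntegrableOn φ (ball (0 : EuclideanSpace ℝ (Fin n)) 1)ᶜ := by
      refine (integrableOn_rpow_norm_compl_ball (n := n) (p := c - a - b)
        (by linarith)).congr_fun (fun y hy => ?_) measurableSet_ball.compl
      have : ¬ ‖y‖ < 1 := by simpa [mem_ball_zero_iff] using hy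
      simp [hφ, this]
    rw [← integrableOn_univ, ← union_compl_self (ball (0 : EuclideanSpace ℝ (Fin n)) 1)]
    exact hb1.union hb2
  set I := ∫ y, φ y with hI
  have hI0 : 0 ≤ I := integral_nonneg hφ_nonneg
  have h2a : (0 : ℝ) < 2 ^ a := rpow_pos_of_pos two_pos a
  refine ⟨2 ^ a * I + 1, by nlinarith, fun E _hE t ht s hs hts => ?_⟩
  set D := dist t s with hDdef
  have hD : 0 < D := dist_pos.mpr hts
  set S := {x : EuclideanSpace ℝ (Fin n) |
      x ∈ ball (0 : EuclideanSpace ℝ (Fin n)) R ∧ dist x s ≤ dist x t} with hS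
  have hSm : MeasurableSet S := by
    have hSeq : S = ball (0 : EuclideanSpace ℝ (Fin n)) R ∩
        {x : EuclideanSpace ℝ (Fin n) | dist x s ≤ dist x t} := rfl
    rw [hSeq]
    exact measurableSet_ball.inter (measurableSet_le (by fun_prop) (by fun_prop))
  set g : EuclideanSpace ℝ (Fin n) → ℝ :=
    fun x => 2 ^ a * D ^ (c - a - b) * φ (D⁻¹ • (x - s)) with hg
  have hg_int : Integrable g :=
    ((hφ_int.comp_smul (inv_ne_zero hD.ne')).comp_sub_right s).const_mul _
  have hg_nonneg : ∀ x, 0 ≤ g x := fun x => by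
    have := hφ_nonneg (D⁻¹ • (x - s))
    have hDp : (0:ℝ) ≤ D ^ (c - a - b) := rpow_nonneg hD.le _
    positivity
  have hnorm : ∀ x : EuclideanSpace ℝ (Fin n), ‖D⁻¹ • (x - s)‖ = D⁻¹ * dist x s := by
    intro x
    rw [norm_smul, Real.norm_eq_abs, abs_of_pos (inv_pos.mpr hD), ← dist_eq_norm]
  have hfg : ∀ x ∈ S, infDist x E ^ c / (dist x t ^ a * dist x s ^ b) ≤ g x := by
    rintro x ⟨hxR, hxst⟩
    rcases eq_or_lt_of_le (dist_nonneg (x := x) (y := s)) with hr0 | hr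
    · -- dist x s = 0, i.e. x = s ∈ E
      have hxs : x = s := dist_eq_zero.mp hr0.symm
      have : infDist x E = 0 := by rw [hxs]; exact infDist_zero_of_mem hs
      rw [this, Real.zero_rpow hc.ne', zero_div]
      exact hg_nonneg x
    · set r := dist x s with hrdef
      have hxt : 0 < dist x t := lt_of_lt_of_le hr hxst
      have hDle : D ≤ 2 * dist x t := by
        have h := dist_triangle t x s
        rw [dist_comm t x] at h
        calc D = dist t s := rfl
          _ ≤ dist x t + dist x s := h
          _ ≤ 2 * dist x t := by linarith
      have hnum : infDist x E ^ c ≤ r ^ c :=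
        Real.rpow_le_rpow infDist_nonneg (infDist_le_dist_of_mem hs) hc.le
      have hra : (0:ℝ) < r ^ b := rpow_pos_of_pos hr _
      have step1 : infDist x E ^ c / (dist x t ^ a * r ^ b) ≤
          r ^ c / (dist x t ^ a * r ^ b) := by
        gcongr
      have hcond : ‖D⁻¹ • (x - s)‖ = D⁻¹ * r := hnorm x
      by_cases hlt : r < D
      · -- inner case : D⁻¹ * r < 1
        have hc1 : ‖D⁻¹ • (x - s)‖ < 1 := by
          rw [hcond, inv_mul_lt_iff₀ hD, mul_one]; exact hlt
        have hlt' : D⁻¹ * r < 1 := by rw [inv_mul_lt_iff₀ hD, mul_one]; exact hlt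
        have hgx : g x = 2 ^ a * D ^ (c - a - b) * ((D⁻¹ * r) ^ (c - b)) := by
          simp only [hg, hφ, hcond, if_pos hlt']
        have hden : (D / 2) ^ a ≤ dist x t ^ a :=
          Real.rpow_le_rpow (by linarith) (by linarith) ha.le
        have step2 : r ^ c / (dist x t ^ a * r ^ b) ≤ r ^ c / ((D / 2) ^ a * r ^ b) :=
          div_le_div_of_nonneg_left (rpow_nonneg hr.le c)
            (mul_pos (rpow_pos_of_pos (by linarith) a) hra)
            (mul_le_mul_of_nonneg_right hden hra.le)
        have hEq : r ^ c / ((D / 2) ^ a * r ^ b) =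
            2 ^ a * D ^ (c - a - b) * ((D⁻¹ * r) ^ (c - b)) := by
          have hDa := (rpow_pos_of_pos hD a).ne'
          have hDb := (rpow_pos_of_pos hD b).ne'
          have hDc := (rpow_pos_of_pos hD c).ne'
          have hrb := (rpow_pos_of_pos hr b).ne'
          have h2an := h2a.ne'
          rw [Real.mul_rpow (inv_nonneg.mpr hD.le) hr.le, Real.inv_rpow hD.le,
            Real.div_rpow hD.le (by norm_num : (0:ℝ) ≤ 2),
            Real.rpow_sub hD (c - a) b, Real.rpow_sub hD c a,
            Real.rpow_sub hD c b, Real.rpow_sub hr c b]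
          field_simp
        rw [hgx]
        exact le_trans step1 (step2.trans_eq hEq)
      · -- outer case : 1 ≤ D⁻¹ * r
        push_neg at hlt
        have hge' : ¬ D⁻¹ * r < 1 := by
          rw [not_lt, le_inv_mul_iff₀ hD, mul_one]; exact hlt
        have hgx : g x = 2 ^ a * D ^ (c - a - b) * ((D⁻¹ * r) ^ (c - a - b)) := by
          simp only [hg, hφ, hcond, if_neg hge']
        have hden : r ^ a ≤ dist x t ^ a :=
          Real.rpow_le_rpow hr.le hxst ha.le
        have step2 : r ^ c / (dist x t ^ a * r ^ b) ≤ r ^ c / (r ^ a * r ^ b) :=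
          div_le_div_of_nonneg_left (rpow_nonneg hr.le c)
            (mul_pos (rpow_pos_of_pos hr a) hra)
            (mul_le_mul_of_nonneg_right hden hra.le)
        have hEq : r ^ c / (r ^ a * r ^ b) = r ^ (c - a - b) := by
          rw [← Real.rpow_add hr, ← Real.rpow_sub hr]
          congr 1; ring
        have step3 : r ^ (c - a - b) ≤ 2 ^ a * D ^ (c - a - b) * ((D⁻¹ * r) ^ (c - a - b)) := by
          have hexp : D ^ (c - a - b) * ((D⁻¹ * r) ^ (c - a - b)) = r ^ (c - a - b) := by
            rw [Real.mul_rpow (by positivity) hr.le, Real.inv_rpow hD.le,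
              ← Real.rpow_neg hD.le, ← mul_assoc, ← Real.rpow_add hD]
            simp
          rw [mul_assoc, hexp]
          nlinarith [Real.one_le_rpow one_le_two ha.le (x := 2) , rpow_nonneg hr.le (c - a - b)]
        rw [hgx]
        calc infDist x E ^ c / (dist x t ^ a * r ^ b)
            ≤ r ^ c / (r ^ a * r ^ b) := le_trans step1 step2
          _ = r ^ (c - a - b) := hEq
          _ ≤ _ := step3
  have hf_nonneg : ∀ x : EuclideanSpace ℝ (Fin n),
      0 ≤ infDist x E ^ c / (dist x t ^ a * dist x s ^ b) := fun x =>
    div_nonneg (rpow_nonneg infDist_nonneg _)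
      (mul_nonneg (rpow_nonneg dist_nonneg _) (rpow_nonneg dist_nonneg _))
  calc ∫ x in S, infDist x E ^ c / (dist x t ^ a * dist x s ^ b)
      ≤ ∫ x in S, g x := by
        refine integral_mono_of_nonneg (ae_of_all _ hf_nonneg) hg_int.integrableOn ?_
        filter_upwards [ae_restrict_mem hSm] with x hx using hfg x hx
    _ ≤ ∫ x, g x := setIntegral_le_integral hg_int (ae_of_all _ hg_nonneg)
    _ = 2 ^ a * D ^ (c - a - b) * ∫ x, φ (D⁻¹ • (x - s)) := by
        simp only [hg]
        exact integral_const_mul _ _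
    _ = 2 ^ a * D ^ (c - a - b) * (D ^ n * I) := by
        rw [integral_sub_right_eq_self (fun z => φ (D⁻¹ • z)) s,
          Measure.integral_comp_inv_smul_of_nonneg volume φ hD.le, hfr, smul_eq_mul]
    _ = (2 ^ a * I) * D ^ (c - a - b + n) := by
        rw [Real.rpow_add hD, Real.rpow_natCast]; ring
    _ ≤ (2 ^ a * I + 1) * D ^ (c - a - b + n) := by
        have : (0:ℝ) ≤ D ^ (c - a - b + n) := rpow_nonneg hD.le _
        nlinarith
end

section
/- For real numbers 0 < b < a, there is a constant C = C(a,b) such that for every z ∈ ℂ with |z| < 1: ∫₀¹ (1-t)^{b-1} |1 - tz|^{-a} dt ≤ C |1 - z|^{-(a-b)}. -/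
open MeasureTheory intervalIntegral


lemma aux_norm_lower (z : ℂ) (hz : ‖z‖ < 1) {t : ℝ} (ht0 : 0 ≤ t) (ht1 : t ≤ 1) :
    max (1 - t) (t * ‖1 - z‖) ≤ ‖1 - (t : ℂ) * z‖ := by
  have hre : z.re ≤ 1 := by
    have := Complex.re_le_norm z
    linarith
  have e1 : ‖1 - (t : ℂ) * z‖ ^ 2 = (1 - t * z.re) ^ 2 + (t * z.im) ^ 2 := by
    rw [Complex.sq_norm, Complex.normSq_apply]
    simp [Complex.sub_re, Complex.sub_im, Complex.mul_re, Complex.mul_im]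
    ring
  have e2 : ‖1 - z‖ ^ 2 = (1 - z.re) ^ 2 + z.im ^ 2 := by
    rw [Complex.sq_norm, Complex.normSq_apply]
    simp [Complex.sub_re, Complex.sub_im]
    ring
  have htz : t * z.re ≤ t := by nlinarith
  have hn := norm_nonneg (1 - (t : ℂ) * z)
  apply max_le
  · have h2 : (1 - t) ^ 2 ≤ ‖1 - (t : ℂ) * z‖ ^ 2 := by
      rw [e1]; nlinarith [sq_nonneg (t * z.im)]
    calc 1 - t = Real.sqrt ((1 - t) ^ 2) := (Real.sqrt_sq (by linarith)).symm
      _ ≤ Real.sqrt (‖1 - (t : ℂ) * z‖ ^ 2) := Real.sqrt_le_sqrt h2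
      _ = ‖1 - (t : ℂ) * z‖ := Real.sqrt_sq hn
  · have h2 : (t * ‖1 - z‖) ^ 2 ≤ ‖1 - (t : ℂ) * z‖ ^ 2 := by
      rw [e1, mul_pow, e2]
      nlinarith [mul_nonneg (show (0:ℝ) ≤ 1 - t by linarith)
        (show (0:ℝ) ≤ 1 + t - 2 * (t * z.re) by linarith)]
    calc t * ‖1 - z‖ = Real.sqrt ((t * ‖1 - z‖) ^ 2) :=
          (Real.sqrt_sq (by positivity)).symm
      _ ≤ Real.sqrt (‖1 - (t : ℂ) * z‖ ^ 2) := Real.sqrt_le_sqrt h2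
      _ = ‖1 - (t : ℂ) * z‖ := Real.sqrt_sq hn


lemma aux_g_intable (a b r : ℝ) (hb : 0 < b) (hr0 : 0 < r) (c d : ℝ) :
    IntervalIntegrable (fun s : ℝ => s ^ (b - 1) * max s r ^ (-a)) volume c d := by
  apply (intervalIntegral.intervalIntegrable_rpow' (by linarith)).mul_continuousOn
  apply Continuous.continuousOn
  apply Continuous.rpow_const (continuous_id.max continuous_const)
  intro x
  exact Or.inl (ne_of_gt (lt_of_lt_of_le hr0 (le_max_right x r)))

lemma aux_integral_g_bound (a b r : ℝ) (hb : 0 < b) (hba : b < a) (hr0 : 0 < r) :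
    ∫ s in (0:ℝ)..1, s ^ (b - 1) * max s r ^ (-a) ≤ (1 / b + 1 / (a - b)) * r ^ (b - a) := by
  have hab : 0 < a - b := by linarith
  have hX : (0:ℝ) < r ^ (b - a) := Real.rpow_pos_of_pos hr0 _
  rcases le_or_gt 1 r with h1r | hr1
  · -- r ≥ 1
    have hle : ∫ s in (0:ℝ)..1, s ^ (b - 1) * max s r ^ (-a) ≤
        ∫ s in (0:ℝ)..1, s ^ (b - 1) * r ^ (-a) := by
      apply intervalIntegral.integral_mono_on (by norm_num)
        (aux_g_intable a b r hb hr0 0 1)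
        ((intervalIntegral.intervalIntegrable_rpow' (by linarith)).mul_const _)
      intro s hs
      have : max s r ^ (-a) ≤ r ^ (-a) :=
        Real.rpow_le_rpow_of_nonpos hr0 (le_max_right s r) (by linarith)
      have hs0 : (0:ℝ) ≤ s ^ (b - 1) := Real.rpow_nonneg hs.1 _
      exact mul_le_mul_of_nonneg_left this hs0
    have hval : ∫ s in (0:ℝ)..1, s ^ (b - 1) * r ^ (-a) = (1 / b) * r ^ (-a) := by
      rw [intervalIntegral.integral_mul_const, integral_rpow (Or.inl (by linarith))]
      rw [show b - 1 + 1 = b by ring, Real.one_rpow, Real.zero_rpow hb.ne']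
      ring
    have hmono : r ^ (-a) ≤ r ^ (b - a) :=
      Real.rpow_le_rpow_of_exponent_le h1r (by linarith)
    calc ∫ s in (0:ℝ)..1, s ^ (b - 1) * max s r ^ (-a)
        ≤ (1 / b) * r ^ (-a) := by rw [← hval]; exact hle
      _ ≤ (1 / b) * r ^ (b - a) := by
          apply mul_le_mul_of_nonneg_left hmono (by positivity)
      _ ≤ (1 / b + 1 / (a - b)) * r ^ (b - a) := by nlinarith [one_div_pos.2 hab]
  · -- r < 1
    have hsplit : ∫ s in (0:ℝ)..1, s ^ (b - 1) * max s r ^ (-a) =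
        (∫ s in (0:ℝ)..r, s ^ (b - 1) * max s r ^ (-a)) +
        ∫ s in r..1, s ^ (b - 1) * max s r ^ (-a) :=
      (intervalIntegral.integral_add_adjacent_intervals
        (aux_g_intable a b r hb hr0 0 r) (aux_g_intable a b r hb hr0 r 1)).symm
    have hA : (∫ s in (0:ℝ)..r, s ^ (b - 1) * max s r ^ (-a)) =
        r ^ (b - a) / b := by
      rw [intervalIntegral.integral_congr (g := fun s => s ^ (b - 1) * r ^ (-a)) ?_]
      · rw [intervalIntegral.integral_mul_const, integral_rpow (Or.inl (by linarith))]
        rw [show b - 1 + 1 = b by ring, Real.zero_rpow hb.ne']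
        rw [show b - a = b + (-a) by ring, Real.rpow_add hr0]
        ring
      · intro s hs
        rw [Set.uIcc_of_le hr0.le] at hs
        simp only []
        rw [max_eq_right hs.2]
    have hB : (∫ s in r..1, s ^ (b - 1) * max s r ^ (-a)) =
        (1 - r ^ (b - a)) / (b - a) := by
      rw [intervalIntegral.integral_congr (g := fun s => s ^ (b - 1 + (-a))) ?_]
      · rw [integral_rpow (Or.inr ⟨by intro h; apply hab.ne'; linarith,
          by rw [Set.uIcc_of_le hr1.le]; intro h; exact absurd h.1 (by linarith)⟩)]
        rw [show b - 1 + (-a) + 1 = b - a by ring, Real.one_rpow]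
      · intro s hs
        rw [Set.uIcc_of_le hr1.le] at hs
        have hs0 : 0 < s := lt_of_lt_of_le hr0 hs.1
        simp only []
        rw [max_eq_left hs.1, Real.rpow_add hs0]
    rw [hsplit, hA, hB]
    have e : (1 - r ^ (b - a)) / (b - a) = (r ^ (b - a) - 1) / (a - b) := by
      rw [show b - a = -(a - b) by ring, div_neg]
      ring
    rw [e]
    have h1 : (r ^ (b - a) - 1) / (a - b) ≤ r ^ (b - a) / (a - b) := by
      apply div_le_div_of_nonneg_right ?_ hab.le
      linarith
    calc r ^ (b - a) / b + (r ^ (b - a) - 1) / (a - b)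
        ≤ r ^ (b - a) / b + r ^ (b - a) / (a - b) := by linarith
      _ = (1 / b + 1 / (a - b)) * r ^ (b - a) := by ring

/-- For `0 < b < a` there is a constant `C` such that for all `z ∈ ℂ` with `|z| < 1`,
`∫₀¹ (1-t)^{b-1} |1-tz|^{-a} dt ≤ C |1-z|^{-(a-b)}`. -/
theorem integral_one_sub_tz_bound (a b : ℝ) (hb : 0 < b) (hba : b < a) :
    ∃ C > (0 : ℝ), ∀ z : ℂ, ‖z‖ < 1 →
      ∫ t in (0 : ℝ)..1, (1 - t) ^ (b - 1) * ‖1 - (t : ℂ) * z‖ ^ (-a) ≤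
        C * ‖1 - z‖ ^ (-(a - b)) := by
  have hab : 0 < a - b := by linarith
  have hC : (0:ℝ) < (4:ℝ) ^ a * (1 / b + 1 / (a - b)) := by positivity
  refine ⟨(4:ℝ) ^ a * (1 / b + 1 / (a - b)), hC, fun z hz => ?_⟩
  set r : ℝ := ‖1 - z‖ with hrdef
  have hz1 : z ≠ 1 := by
    intro h; rw [h] at hz; simp at hz
  have hr0 : 0 < r := by
    rw [hrdef, norm_pos_iff, sub_ne_zero]
    exact fun h => hz1 h.symm
  have hr2 : r ≤ 2 := by
    calc ‖1 - z‖ ≤ ‖(1:ℂ)‖ + ‖z‖ := norm_sub_le _ _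
      _ ≤ 2 := by rw [norm_one]; linarith
  have hrba : (0:ℝ) ≤ r ^ (-(a - b)) := Real.rpow_nonneg hr0.le _
  by_cases hf : IntervalIntegrable
      (fun t : ℝ => (1 - t) ^ (b - 1) * ‖1 - (t : ℂ) * z‖ ^ (-a)) volume 0 1
  swap
  · rw [intervalIntegral.integral_undef hf]
    exact mul_nonneg hC.le hrba
  · -- pointwise bound
    have hpt : ∀ t ∈ Set.Icc (0:ℝ) 1,
        (1 - t) ^ (b - 1) * ‖1 - (t : ℂ) * z‖ ^ (-a) ≤
        (4:ℝ) ^ a * ((1 - t) ^ (b - 1) * max (1 - t) r ^ (-a)) := by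
      intro t ht
      obtain ⟨ht0, ht1⟩ := ht
      have hm0 : 0 < max (1 - t) r := lt_of_lt_of_le hr0 (le_max_right _ _)
      have hmax : max (1 - t) r ≤ 4 * max (1 - t) (t * r) := by
        rcases le_total t (1/2) with h | h
        · apply max_le
          · nlinarith [le_max_left (1 - t) (t * r), le_max_right (1 - t) (t * r),
              mul_nonneg ht0 hr0.le]
          · nlinarith [le_max_left (1 - t) (t * r)]
        · apply max_le
          · nlinarith [le_max_left (1 - t) (t * r), le_max_right (1 - t) (t * r),
              mul_nonneg ht0 hr0.le]
          · nlinarith [le_max_right (1 - t) (t * r)]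
      have hlow := aux_norm_lower z hz ht0 ht1
      have h2 : max (1 - t) r / 4 ≤ ‖1 - (t : ℂ) * z‖ := by
        rw [div_le_iff₀ (by norm_num : (0:ℝ) < 4)]
        calc max (1 - t) r ≤ 4 * max (1 - t) (t * r) := hmax
          _ ≤ 4 * ‖1 - (t : ℂ) * z‖ := by linarith
          _ = ‖1 - (t : ℂ) * z‖ * 4 := by ring
      have h3 : ‖1 - (t : ℂ) * z‖ ^ (-a) ≤ (max (1 - t) r / 4) ^ (-a) :=
        Real.rpow_le_rpow_of_nonpos (by positivity) h2 (by linarith)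
      have h4 : (max (1 - t) r / 4 : ℝ) ^ (-a) = (4:ℝ) ^ a * max (1 - t) r ^ (-a) := by
        rw [Real.div_rpow hm0.le (by norm_num : (0:ℝ) ≤ 4),
          Real.rpow_neg (by norm_num : (0:ℝ) ≤ 4)]
        field_simp
      have hb0 : (0:ℝ) ≤ (1 - t) ^ (b - 1) := Real.rpow_nonneg (by linarith) _
      calc (1 - t) ^ (b - 1) * ‖1 - (t : ℂ) * z‖ ^ (-a)
          ≤ (1 - t) ^ (b - 1) * ((4:ℝ) ^ a * max (1 - t) r ^ (-a)) := by
            rw [← h4]; exact mul_le_mul_of_nonneg_left h3 hb0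
        _ = (4:ℝ) ^ a * ((1 - t) ^ (b - 1) * max (1 - t) r ^ (-a)) := by ring
    have hGint : IntervalIntegrable
        (fun t : ℝ => (4:ℝ) ^ a * ((1 - t) ^ (b - 1) * max (1 - t) r ^ (-a)))
        volume 0 1 := by
      have h := (((aux_g_intable a b r hb hr0 0 1).const_mul ((4:ℝ) ^ a)).comp_sub_left 1)
      simpa using h.symm
    calc ∫ t in (0:ℝ)..1, (1 - t) ^ (b - 1) * ‖1 - (t : ℂ) * z‖ ^ (-a)
        ≤ ∫ t in (0:ℝ)..1,
            (4:ℝ) ^ a * ((1 - t) ^ (b - 1) * max (1 - t) r ^ (-a)) :=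
          intervalIntegral.integral_mono_on (by norm_num) hf hGint hpt
      _ = (4:ℝ) ^ a * ∫ t in (0:ℝ)..1, (1 - t) ^ (b - 1) * max (1 - t) r ^ (-a) :=
          intervalIntegral.integral_const_mul _ _
      _ = (4:ℝ) ^ a * ∫ s in (0:ℝ)..1, s ^ (b - 1) * max s r ^ (-a) := by
          congr 1
          simpa using intervalIntegral.integral_comp_sub_left (a := 0) (b := 1)
            (fun s : ℝ => s ^ (b - 1) * max s r ^ (-a)) 1
      _ ≤ (4:ℝ) ^ a * ((1 / b + 1 / (a - b)) * r ^ (b - a)) := by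
          apply mul_le_mul_of_nonneg_left
            (aux_integral_g_bound a b r hb hba hr0) (by positivity)
      _ = (4:ℝ) ^ a * (1 / b + 1 / (a - b)) * r ^ (-(a - b)) := by
          rw [show -(a - b) = b - a by ring]; ring
end

section
/- For real numbers 0 < a < b, there is a constant C = C(a,b) such that for every z ∈ ℂ with |z| < 1: ∫₀¹ (1-t)^{b-1} |1 - tz|^{-a} dt ≤ C, i.e., the integral is bounded independently of z. -/
open MeasureTheory

/-- For `0 < a < b` there is a constant `C = C(a,b)` such that for all `z ∈ ℂ` with
`|z| < 1`, `∫₀¹ (1-t)^{b-1} |1-tz|^{-a} dt ≤ C`, uniformly in `z`. -/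
theorem integral_one_sub_tz_bounded (a b : ℝ) (ha : 0 < a) (hab : a < b) :
    ∃ C > (0 : ℝ), ∀ z : ℂ, ‖z‖ < 1 →
      ∫ t in (0 : ℝ)..1, (1 - t) ^ (b - 1) * ‖1 - (t : ℂ) * z‖ ^ (-a) ≤ C := by
  have hba : (0:ℝ) < b - a := by linarith
  refine ⟨1 / (b - a), by positivity, fun z hz => ?_⟩
  set f : ℝ → ℝ := fun t => (1 - t) ^ (b - 1) * ‖1 - (t : ℂ) * z‖ ^ (-a) with hf
  set g : ℝ → ℝ := fun t => (1 - t) ^ (b - a - 1) with hg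
  have hr : (-1:ℝ) < b - a - 1 := by linarith
  have hgi : IntervalIntegrable g volume 0 1 := by
    have := (intervalIntegral.intervalIntegrable_rpow' hr (a := 0) (b := 1)).comp_sub_left 1
    simpa using this.symm
  have hgval : ∫ t in (0:ℝ)..1, g t = 1 / (b - a) := by
    have h1 : ∫ t in (0:ℝ)..1, g t = ∫ x in (0:ℝ)..1, x ^ (b - a - 1) := by
      have := intervalIntegral.integral_comp_sub_left (fun x : ℝ => x ^ (b - a - 1)) 1
        (a := 0) (b := 1)
      simpa using this
    rw [h1, integral_rpow (Or.inl hr)]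
    rw [show b - a - 1 + 1 = b - a by ring, Real.one_rpow, Real.zero_rpow hba.ne']
    ring
  by_cases hfi : IntervalIntegrable f volume 0 1
  · have hmono : ∀ᵐ t ∂(volume.restrict (Set.Icc (0:ℝ) 1)), f t ≤ g t := by
      have hone : (volume.restrict (Set.Icc (0:ℝ) 1)) {1} = 0 := by
        simp [Measure.restrict_apply']
      filter_upwards [ae_restrict_mem measurableSet_Icc,
        MeasureTheory.measure_eq_zero_iff_ae_notMem.mp hone] with t ht ht1
      have ht0 : 0 ≤ t := ht.1
      have ht1' : t < 1 := lt_of_le_of_ne ht.2 (by simpa using ht1)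
      have hpos : 0 < 1 - t := by linarith
      have hnorm : 1 - t ≤ ‖1 - (t : ℂ) * z‖ := by
        have := norm_sub_norm_le (1 : ℂ) ((t:ℂ) * z)
        have h2 : ‖(t:ℂ) * z‖ ≤ t := by
          rw [norm_mul, Complex.norm_real, Real.norm_of_nonneg ht0]
          nlinarith [norm_nonneg z]
        simp only [norm_one] at this
        linarith
      have h3 : ‖1 - (t : ℂ) * z‖ ^ (-a) ≤ (1 - t) ^ (-a) :=
        Real.rpow_le_rpow_of_nonpos hpos hnorm (by linarith)
      calc f t ≤ (1 - t) ^ (b - 1) * (1 - t) ^ (-a) := by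
            apply mul_le_mul_of_nonneg_left h3 (Real.rpow_nonneg hpos.le _)
        _ = g t := by
            show _ = (1 - t) ^ (b - a - 1)
            rw [← Real.rpow_add hpos]; ring_nf
    calc ∫ t in (0:ℝ)..1, f t ≤ ∫ t in (0:ℝ)..1, g t :=
          intervalIntegral.integral_mono_ae_restrict zero_le_one hfi hgi hmono
      _ = 1 / (b - a) := hgval
  · rw [show (∫ t in (0:ℝ)..1, f t) = 0 from intervalIntegral.integral_undef hfi]
    positivity
end

section
/- Let E ⊂ S be a closed subset of the unit sphere S ⊂ ℂⁿ, with the pseudometric d(z,w) = |1 - z·w̄|. Suppose the upper dimension condition holds: the number of R-separated points in any pseudoball B(ξ, kR) is at most C k^s for some s < n. Then for every ζ ∈ E, R > 0 and 0 < a < n - s, ∫_{B(ζ,R)} d(z,E)^{-a} dσ(z) ≤ C' R^{n-a}, where σ is surface measure on S and d(z,E) = inf_{w∈E} |1 - z·w̄|. -/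
open MeasureTheory Metric Filter ENNReal

noncomputable section

/-- The non-isotropic pseudodistance `d(z,w) = |1 - z·w̄|` on `ℂⁿ`. -/
def dd {n : ℕ} (z w : EuclideanSpace ℂ (Fin n)) : ℝ :=
  ‖(1 : ℂ) - (inner ℂ w z : ℂ)‖

/-- The pseudoball `{z ∈ S : d(z,ξ) < R}` of the unit sphere `S ⊆ ℂⁿ`. -/
def pball {n : ℕ} (ξ : EuclideanSpace ℂ (Fin n)) (R : ℝ) : Set (EuclideanSpace ℂ (Fin n)) :=
  {z ∈ sphere (0 : EuclideanSpace ℂ (Fin n)) 1 | dd z ξ < R}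

section Aux

variable {n : ℕ}

lemma dd_comm (z w : EuclideanSpace ℂ (Fin n)) : dd z w = dd w z := by
  unfold dd
  conv_rhs => rw [← RCLike.norm_conj]
  rw [show (starRingEnd ℂ) ((1:ℂ) - inner ℂ z w) = 1 - (starRingEnd ℂ) (inner ℂ z w) by
    ring_nf; simp [map_sub]]
  rw [inner_conj_symm]

lemma dd_self {z : EuclideanSpace ℂ (Fin n)} (hz : ‖z‖ = 1) : dd z z = 0 := by
  unfold dd
  rw [inner_self_eq_norm_sq_to_K (𝕜 := ℂ)]
  simp [hz]

lemma perp_norm_sq {z w : EuclideanSpace ℂ (Fin n)} (hz : ‖z‖ = 1) (hw : ‖w‖ = 1) :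
    ‖z - (inner ℂ w z : ℂ) • w‖ ^ 2 = 1 - ‖(inner ℂ w z : ℂ)‖ ^ 2 := by
  have h := norm_sub_sq (𝕜 := ℂ) z ((inner ℂ w z : ℂ) • w)
  have h2 : RCLike.re (inner ℂ z ((inner ℂ w z : ℂ) • w) : ℂ) = ‖(inner ℂ w z : ℂ)‖ ^ 2 := by
    rw [inner_smul_right,
      show (inner ℂ z w : ℂ) = (starRingEnd ℂ) (inner ℂ w z) from (inner_conj_symm z w).symm,
      RCLike.mul_conj]
    simp [← Complex.ofReal_pow]
  rw [h, h2, norm_smul, hz, hw]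
  simp
  ring

lemma hinner_eq {z w u : EuclideanSpace ℂ (Fin n)} (hw : ‖w‖ = 1) :
    (inner ℂ (u - (inner ℂ w u : ℂ) • w) (z - (inner ℂ w z : ℂ) • w) : ℂ)
      = (inner ℂ u z : ℂ) - (inner ℂ w z : ℂ) * (inner ℂ u w : ℂ) := by
  have hww : (inner ℂ w w : ℂ) = 1 := by
    rw [inner_self_eq_norm_sq_to_K (𝕜 := ℂ), hw]; norm_num
  rw [inner_sub_left, inner_sub_right, inner_sub_right, inner_smul_left, inner_smul_right,
    inner_smul_left, inner_smul_right, hww,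
    show (inner ℂ u w : ℂ) = (starRingEnd ℂ) (inner ℂ w u) from (inner_conj_symm u w).symm]
  ring

lemma key_ineq {z w u : EuclideanSpace ℂ (Fin n)} (hz : ‖z‖ = 1) (hw : ‖w‖ = 1)
    (hu : ‖u‖ = 1) :
    ‖(inner ℂ u z : ℂ) - (inner ℂ w z : ℂ) * (inner ℂ u w : ℂ)‖ ^ 2
      ≤ (1 - ‖(inner ℂ w z : ℂ)‖ ^ 2) * (1 - ‖(inner ℂ w u : ℂ)‖ ^ 2) := by
  have hzp := perp_norm_sq hz hw
  have hup := perp_norm_sq hu hw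
  have hcs := norm_inner_le_norm (𝕜 := ℂ) (u - (inner ℂ w u : ℂ) • w) (z - (inner ℂ w z : ℂ) • w)
  rw [hinner_eq hw] at hcs
  have h1 : ‖(inner ℂ u z : ℂ) - (inner ℂ w z : ℂ) * (inner ℂ u w : ℂ)‖ ^ 2
      ≤ (‖u - (inner ℂ w u : ℂ) • w‖ * ‖z - (inner ℂ w z : ℂ) • w‖) ^ 2 := by
    apply pow_le_pow_left₀ (norm_nonneg _) hcs
  calc ‖(inner ℂ u z : ℂ) - (inner ℂ w z : ℂ) * (inner ℂ u w : ℂ)‖ ^ 2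
      ≤ (‖u - (inner ℂ w u : ℂ) • w‖ * ‖z - (inner ℂ w z : ℂ) • w‖) ^ 2 := h1
    _ = (1 - ‖(inner ℂ w z : ℂ)‖ ^ 2) * (1 - ‖(inner ℂ w u : ℂ)‖ ^ 2) := by
        rw [mul_pow, hzp, hup]; ring

lemma norm_sub_norm_le_dd {A : ℂ} (hA : ‖A‖ ≤ 1) : 1 - ‖A‖ ^ 2 ≤ 2 * ‖(1:ℂ) - A‖ := by
  have h1 : (1:ℝ) - ‖A‖ ≤ ‖(1:ℂ) - A‖ := by
    have := norm_sub_norm_le (1:ℂ) A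
    simpa using this
  have h0 : (0:ℝ) ≤ ‖A‖ := norm_nonneg _
  nlinarith

lemma dd_quasi {z w u : EuclideanSpace ℂ (Fin n)} (hz : ‖z‖ = 1) (hw : ‖w‖ = 1)
    (hu : ‖u‖ = 1) : dd z u ≤ 3 * (dd z w + dd w u) := by
  set A : ℂ := inner ℂ w z with hA
  set B : ℂ := inner ℂ u w with hB
  set Cc : ℂ := inner ℂ u z with hCc
  have hAle : ‖A‖ ≤ 1 := by
    calc ‖A‖ ≤ ‖w‖ * ‖z‖ := norm_inner_le_norm w z
    _ = 1 := by rw [hz, hw]; ring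
  have hBle : ‖B‖ ≤ 1 := by
    calc ‖B‖ ≤ ‖u‖ * ‖w‖ := norm_inner_le_norm u w
    _ = 1 := by rw [hu, hw]; ring
  set α := dd z w with hα
  set β := dd w u with hβ
  have hα0 : 0 ≤ α := norm_nonneg _
  have hβ0 : 0 ≤ β := norm_nonneg _
  have hα2 : α ≤ 2 := by
    calc α ≤ ‖(1:ℂ)‖ + ‖A‖ := norm_sub_le _ _
    _ ≤ 1 + 1 := by simpa using hAle
    _ = 2 := by norm_num
  have hβ2 : β ≤ 2 := by
    calc β ≤ ‖(1:ℂ)‖ + ‖B‖ := norm_sub_le _ _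
    _ ≤ 1 + 1 := by simpa using hBle
    _ = 2 := by norm_num
  have hBnorm : ‖(inner ℂ w u : ℂ)‖ = ‖B‖ := by
    rw [hB, ← inner_conj_symm w u]; exact (RCLike.norm_conj _)
  have hkey := key_ineq hz hw hu
  rw [← hA, ← hB, ← hCc, hBnorm] at hkey
  have h1A : 1 - ‖A‖ ^ 2 ≤ 2 * α := norm_sub_norm_le_dd hAle
  have h1B : 1 - ‖B‖ ^ 2 ≤ 2 * β := norm_sub_norm_le_dd hBle
  have hcross_sq : ‖Cc - A * B‖ ^ 2 ≤ 4 * (α * β) := by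
    have hA2 : 0 ≤ 1 - ‖A‖ ^ 2 := by nlinarith [norm_nonneg A]
    have hB2 : 0 ≤ 1 - ‖B‖ ^ 2 := by nlinarith [norm_nonneg B]
    nlinarith [hkey]
  have hcross : ‖Cc - A * B‖ ≤ α + β := by
    nlinarith [norm_nonneg (Cc - A * B), sq_nonneg (α - β)]
  have hid : (1:ℂ) - Cc = (((1 - A) + (1 - B)) - (1 - A) * (1 - B)) + (A * B - Cc) := by
    ring
  have hbound : dd z u ≤ (α + β + α * β) + ‖Cc - A * B‖ := by
    calc dd z u = ‖(1:ℂ) - Cc‖ := rfl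
    _ = ‖(((1 - A) + (1 - B)) - (1 - A) * (1 - B)) + (A * B - Cc)‖ := by rw [← hid]
    _ ≤ ‖((1 - A) + (1 - B)) - (1 - A) * (1 - B)‖ + ‖A * B - Cc‖ := norm_add_le _ _
    _ ≤ (‖(1 - A) + (1 - B)‖ + ‖(1 - A) * (1 - B)‖) + ‖A * B - Cc‖ := by
        gcongr; exact norm_sub_le _ _
    _ ≤ ((‖(1:ℂ) - A‖ + ‖(1:ℂ) - B‖) + ‖(1:ℂ) - A‖ * ‖(1:ℂ) - B‖) + ‖A * B - Cc‖ := by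
        gcongr
        · exact norm_add_le _ _
        · rw [norm_mul]
    _ = (α + β + α * β) + ‖Cc - A * B‖ := by rw [norm_sub_rev (A*B) Cc]; rfl
  have hαβ : α * β ≤ α + β := by nlinarith
  linarith

lemma dd_lip (w : EuclideanSpace ℂ (Fin n)) (hw : ‖w‖ = 1) (z z' : EuclideanSpace ℂ (Fin n)) :
    dd z w ≤ dd z' w + ‖z - z'‖ := by
  unfold dd
  have h : ((1:ℂ) - inner ℂ w z) = ((1:ℂ) - inner ℂ w z') + inner ℂ w (z' - z) := by
    rw [inner_sub_right]; ring
  calc ‖(1:ℂ) - inner ℂ w z‖ = ‖((1:ℂ) - inner ℂ w z') + (inner ℂ w (z' - z) : ℂ)‖ := by rw [← h]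
  _ ≤ ‖(1:ℂ) - inner ℂ w z'‖ + ‖(inner ℂ w (z' - z) : ℂ)‖ := norm_add_le _ _
  _ ≤ ‖(1:ℂ) - inner ℂ w z'‖ + ‖z - z'‖ := by
      gcongr
      calc ‖(inner ℂ w (z' - z) : ℂ)‖ ≤ ‖w‖ * ‖z' - z‖ := norm_inner_le_norm _ _
      _ = ‖z - z'‖ := by rw [hw, one_mul, norm_sub_rev]

lemma distE_lip (E : Set (EuclideanSpace ℂ (Fin n))) (hEne : E.Nonempty)
    (hES : E ⊆ sphere (0 : EuclideanSpace ℂ (Fin n)) 1) :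
    LipschitzWith 1 (fun z => sInf (dd z '' E)) := by
  have hb : ∀ z : EuclideanSpace ℂ (Fin n), BddBelow (dd z '' E) := by
    intro z
    exact ⟨0, fun y hy => by obtain ⟨w, _, rfl⟩ := hy; exact norm_nonneg _⟩
  have key : ∀ z z' : EuclideanSpace ℂ (Fin n),
      sInf (dd z '' E) ≤ sInf (dd z' '' E) + ‖z - z'‖ := by
    intro z z'
    have h : sInf (dd z '' E) - ‖z - z'‖ ≤ sInf (dd z' '' E) := by
      apply le_csInf (hEne.image _)
      rintro y ⟨w, hwE, rfl⟩
      have hw1 : ‖w‖ = 1 := by simpa using hES hwE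
      have h1 : sInf (dd z '' E) ≤ dd z w := csInf_le (hb z) ⟨w, hwE, rfl⟩
      have h2 := dd_lip w hw1 z z'
      linarith
    linarith
  apply LipschitzWith.of_dist_le_mul
  intro z z'
  rw [NNReal.coe_one, one_mul, Real.dist_eq, abs_sub_le_iff]
  constructor
  · have := key z z'; have h2 : ‖z - z'‖ = dist z z' := (dist_eq_norm _ _).symm
    linarith [this, h2 ▸ this]
  · have := key z' z
    rw [norm_sub_rev] at this
    have h2 : ‖z - z'‖ = dist z z' := (dist_eq_norm _ _).symm
    linarith

lemma exists_maximal_sep (P : Set (EuclideanSpace ℂ (Fin n))) (t : ℝ)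
    (hP : ∀ w ∈ P, dd w w < t) (Nb : ℕ)
    (hb : ∀ T : Finset (EuclideanSpace ℂ (Fin n)), (↑T : Set _) ⊆ P →
      (∀ p ∈ T, ∀ q ∈ T, p ≠ q → t ≤ dd p q) → T.card ≤ Nb) :
    ∃ T : Finset (EuclideanSpace ℂ (Fin n)), (↑T : Set _) ⊆ P ∧
      (∀ p ∈ T, ∀ q ∈ T, p ≠ q → t ≤ dd p q) ∧ ∀ w ∈ P, ∃ p ∈ T, dd w p < t := by
  classical
  set M : Set ℕ := {m | ∃ T : Finset (EuclideanSpace ℂ (Fin n)), (↑T : Set _) ⊆ P ∧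
    (∀ p ∈ T, ∀ q ∈ T, p ≠ q → t ≤ dd p q) ∧ T.card = m} with hM
  have h0 : 0 ∈ M := ⟨∅, by simp, by simp, rfl⟩
  have hbdd : BddAbove M := by
    refine ⟨Nb, ?_⟩
    rintro m ⟨T, hT1, hT2, rfl⟩
    exact hb T hT1 hT2
  obtain ⟨T, hT1, hT2, hTcard⟩ := Nat.sSup_mem ⟨0, h0⟩ hbdd
  refine ⟨T, hT1, hT2, ?_⟩
  intro w hwP
  by_contra hcon
  push_neg at hcon
  have hwT : w ∉ T := fun hw => absurd (hP w hwP) (not_lt.2 (hcon w hw))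
  have hsep' : ∀ p ∈ insert w T, ∀ q ∈ insert w T, p ≠ q → t ≤ dd p q := by
    intro p hp q hq hpq
    rcases Finset.mem_insert.1 hp with rfl | hp'
    · rcases Finset.mem_insert.1 hq with rfl | hq'
      · exact absurd rfl hpq
      · exact hcon q hq'
    · rcases Finset.mem_insert.1 hq with rfl | hq'
      · rw [dd_comm]; exact hcon p hp'
      · exact hT2 p hp' q hq' hpq
  have hmem : (insert w T).card ∈ M :=
    ⟨insert w T, by
      intro x hx
      rcases Finset.mem_insert.1 hx with rfl | hx'
      · exact hwP
      · exact hT1 hx', hsep', rfl⟩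
  have := le_csSup hbdd hmem
  rw [Finset.card_insert_of_notMem hwT, hTcard] at this
  omega

lemma dd_le_norm {z ξ : EuclideanSpace ℂ (Fin n)} (hξ : ‖ξ‖ = 1) : dd z ξ ≤ ‖z - ξ‖ := by
  unfold dd
  have h : (1:ℂ) - inner ℂ ξ z = inner ℂ ξ (ξ - z) := by
    rw [inner_sub_right, inner_self_eq_norm_sq_to_K (𝕜 := ℂ), hξ]
    norm_num
  rw [h]
  calc ‖(inner ℂ ξ (ξ - z) : ℂ)‖ ≤ ‖ξ‖ * ‖ξ - z‖ := norm_inner_le_norm _ _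
  _ = ‖z - ξ‖ := by rw [hξ, one_mul, norm_sub_rev]

lemma sphere_cover :
    ∃ I : Finset (EuclideanSpace ℂ (Fin n)),
      (↑I : Set _) ⊆ sphere (0 : EuclideanSpace ℂ (Fin n)) 1 ∧
      sphere (0 : EuclideanSpace ℂ (Fin n)) 1 ⊆ ⋃ ξ ∈ I, pball ξ (1/6) := by
  classical
  have hcomp : IsCompact (sphere (0 : EuclideanSpace ℂ (Fin n)) 1) := isCompact_sphere _ _
  have hcov : sphere (0 : EuclideanSpace ℂ (Fin n)) 1 ⊆
      ⋃ ξ ∈ sphere (0 : EuclideanSpace ℂ (Fin n)) 1, ball ξ (1/6) := by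
    intro z hz
    exact Set.mem_biUnion hz (mem_ball_self (by norm_num))
  obtain ⟨b, hbsub, hbfin, hbcov⟩ := hcomp.elim_finite_subcover_image
    (fun ξ _ => isOpen_ball) hcov
  refine ⟨hbfin.toFinset, by simpa using hbsub, ?_⟩
  intro z hz
  obtain ⟨ξ, hξb, hzξ⟩ := Set.mem_iUnion₂.1 (hbcov hz)
  refine Set.mem_biUnion (hbfin.mem_toFinset.2 hξb) ?_
  refine ⟨hz, ?_⟩
  have hξ1 : ‖ξ‖ = 1 := by simpa using hbsub hξb
  calc dd z ξ ≤ ‖z - ξ‖ := dd_le_norm hξ1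
  _ < 1/6 := by rw [← dist_eq_norm]; exact hzξ

lemma integral_le_of_lintegral_le {X : Type*} [MeasurableSpace X] (σ : Measure X) (B : Set X)
    (f : X → ℝ) (hf0 : ∀ z, 0 ≤ f z) (hfm : AEStronglyMeasurable f (σ.restrict B)) (M : ℝ)
    (hM : 0 ≤ M) (h : ∫⁻ z in B, ENNReal.ofReal (f z) ∂σ ≤ ENNReal.ofReal M) :
    ∫ z in B, f z ∂σ ≤ M := by
  rw [integral_eq_lintegral_of_nonneg_ae (ae_of_all _ hf0) hfm]
  calc (∫⁻ z in B, ENNReal.ofReal (f z) ∂σ).toReal ≤ (ENNReal.ofReal M).toReal :=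
        ENNReal.toReal_mono ENNReal.ofReal_ne_top h
  _ = M := ENNReal.toReal_ofReal hM

lemma dyadic_bound {X : Type*} [MeasurableSpace X] (σ : Measure X) (B : Set X)
    (g : X → ℝ) (a θ K D : ℝ) (ha : 0 < a) (haθ : a < θ)
    (hK : 0 ≤ K) (hD : 0 < D)
    (hmeas : ∀ t : ℝ, 0 < t → t ≤ D → σ {z | z ∈ B ∧ g z < t} ≤ ENNReal.ofReal (K * t ^ θ))
    (hσB : σ B ≤ ENNReal.ofReal (K * D ^ θ)) :
    ∫⁻ z in B, ENNReal.ofReal (g z ^ (-a)) ∂σ ≤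
      ENNReal.ofReal (K * D ^ (θ - a) * ((2:ℝ) ^ a * (1 - (1/2:ℝ) ^ (θ - a))⁻¹ + 1)) := by
  set q : ℝ := 1/2 with hqdef
  have hq0 : (0:ℝ) < q := by norm_num
  have hq1 : q < 1 := by norm_num
  set ρ : ℝ := q ^ (θ - a) with hρdef
  have hθa : (0:ℝ) < θ - a := by linarith
  have hρ0 : 0 < ρ := Real.rpow_pos_of_pos hq0 _
  have hρ1 : ρ < 1 := Real.rpow_lt_one hq0.le hq1 hθa
  have h2aq : (2:ℝ) ^ a = q ^ (-a) := by
    rw [hqdef, one_div, Real.inv_rpow (by norm_num), ← Real.rpow_neg (by norm_num), neg_neg]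
  set f : X → ℝ≥0∞ := fun z => ENNReal.ofReal (g z ^ (-a)) with hfdef
  set A : ℕ → Set X := fun j => B ∩ g ⁻¹' Set.Ico (D * q ^ (j+1)) (D * q ^ j) with hAdef
  set Atop : Set X := B ∩ g ⁻¹' Set.Ici D with hAtopdef
  set N : Set X := B ∩ g ⁻¹' Set.Iic 0 with hNdef
  have hsub : B ⊆ Atop ∪ ((⋃ j, A j) ∪ N) := by
    intro z hz
    rcases le_or_gt (g z) 0 with h0 | h0
    · exact Or.inr (Or.inr ⟨hz, h0⟩)
    rcases le_or_gt D (g z) with hD' | hD'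
    · exact Or.inl ⟨hz, hD'⟩
    have hex : ∃ m : ℕ, D * q ^ (m+1) ≤ g z := by
      obtain ⟨m, hm⟩ := exists_pow_lt_of_lt_one (x := g z / D) (by positivity) hq1
      refine ⟨m, ?_⟩
      have hmono : q ^ (m+1) ≤ q ^ m := by
        apply pow_le_pow_of_le_one hq0.le hq1.le (by omega)
      have h2 : q ^ m * D < g z / D * D := mul_lt_mul_of_pos_right hm hD
      rw [div_mul_cancel₀ _ (ne_of_gt hD)] at h2
      nlinarith
    classical
    refine Or.inr (Or.inl (Set.mem_iUnion.2 ⟨Nat.find hex, hz, Nat.find_spec hex, ?_⟩))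
    rcases Nat.eq_zero_or_pos (Nat.find hex) with hj0 | hjpos
    · rw [hj0]; simpa using hD'
    · obtain ⟨j', hj'⟩ : ∃ j', Nat.find hex = j' + 1 := ⟨Nat.find hex - 1, by omega⟩
      rw [hj']
      have := Nat.find_min hex (m := j') (by omega)
      linarith [lt_of_not_ge this]
  have hN : σ N = 0 := by
    refine le_antisymm ?_ (zero_le (a := σ N))
    have hNle : ∀ m : ℕ, σ N ≤ ENNReal.ofReal ((K * D ^ θ) * (q ^ θ) ^ m) := by
      intro m
      have hsubN : N ⊆ {z | z ∈ B ∧ g z < D * q ^ m} := by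
        rintro z ⟨hzB, hz0⟩
        exact ⟨hzB, lt_of_le_of_lt hz0 (by positivity)⟩
      have hq' : D * q ^ m ≤ D := by
        nlinarith [pow_le_one₀ hq0.le hq1.le (n := m), pow_pos hq0 m]
      calc σ N ≤ σ {z | z ∈ B ∧ g z < D * q ^ m} := measure_mono hsubN
      _ ≤ ENNReal.ofReal (K * (D * q ^ m) ^ θ) := hmeas _ (by positivity) hq'
      _ = ENNReal.ofReal ((K * D ^ θ) * (q ^ θ) ^ m) := by
          congr 1
          rw [Real.mul_rpow hD.le (by positivity), ← Real.rpow_natCast q m,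
            ← Real.rpow_natCast (q ^ θ) m, ← Real.rpow_mul hq0.le, ← Real.rpow_mul hq0.le,
            mul_comm θ (m:ℝ)]
          ring
    have htend : Tendsto (fun m : ℕ => ENNReal.ofReal ((K * D ^ θ) * (q ^ θ) ^ m)) atTop
        (nhds 0) := by
      have h1 : Tendsto (fun m : ℕ => (K * D ^ θ) * (q ^ θ) ^ m) atTop (nhds 0) := by
        have := tendsto_pow_atTop_nhds_zero_of_lt_one (r := q ^ θ)
          (Real.rpow_pos_of_pos hq0 _).le (Real.rpow_lt_one hq0.le hq1 (by linarith))
        simpa using this.const_mul (K * D ^ θ)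
      have := ENNReal.tendsto_ofReal h1
      simpa using this
    exact ge_of_tendsto' htend hNle
  have htop : ∫⁻ z in Atop, f z ∂σ ≤ ENNReal.ofReal (K * D ^ (θ - a)) := by
    calc ∫⁻ z in Atop, f z ∂σ ≤ ∫⁻ _ in Atop, ENNReal.ofReal (D ^ (-a)) ∂σ := by
          apply setLIntegral_mono measurable_const
          rintro z ⟨_, hz⟩
          exact ENNReal.ofReal_le_ofReal (Real.rpow_le_rpow_of_nonpos hD hz (by linarith))
    _ = ENNReal.ofReal (D ^ (-a)) * σ Atop := setLIntegral_const _ _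
    _ ≤ ENNReal.ofReal (D ^ (-a)) * ENNReal.ofReal (K * D ^ θ) := by
        gcongr
        exact le_trans (measure_mono Set.inter_subset_left) hσB
    _ = ENNReal.ofReal (K * D ^ (θ - a)) := by
        rw [← ENNReal.ofReal_mul (by positivity)]
        congr 1
        rw [show θ - a = -a + θ by ring, Real.rpow_add hD]
        ring
  have hterm : ∀ j : ℕ, (D * q ^ (j+1)) ^ (-a) * (K * (D * q ^ j) ^ θ)
      = (K * D ^ (θ - a) * (2:ℝ) ^ a) * ρ ^ j := by
    intro j
    have L : (D * q ^ (j+1)) ^ (-a) * (K * (D * q ^ j) ^ θ)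
        = K * (D ^ (θ - a)) * q ^ ((j:ℝ) * (θ - a) - a) := by
      rw [Real.mul_rpow hD.le (by positivity), Real.mul_rpow hD.le (by positivity),
        ← Real.rpow_natCast q (j+1), ← Real.rpow_natCast q j,
        ← Real.rpow_mul hq0.le, ← Real.rpow_mul hq0.le,
        show θ - a = -a + θ by ring, Real.rpow_add hD,
        show (j:ℝ) * (-a + θ) - a = (↑(j+1) * (-a)) + ((j:ℝ) * θ) by push_cast; ring,
        Real.rpow_add hq0]
      ring
    have R : (K * D ^ (θ - a) * (2:ℝ) ^ a) * ρ ^ j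
        = K * (D ^ (θ - a)) * q ^ ((j:ℝ) * (θ - a) - a) := by
      rw [h2aq, hρdef, ← Real.rpow_natCast (q ^ (θ - a)) j, ← Real.rpow_mul hq0.le,
        show (j:ℝ) * (θ - a) - a = -a + (θ - a) * (j:ℝ) by ring, Real.rpow_add hq0]
      ring
    rw [L, R]
  have hAj : ∀ j : ℕ, ∫⁻ z in A j, f z ∂σ ≤
      ENNReal.ofReal ((K * D ^ (θ - a) * (2:ℝ) ^ a) * ρ ^ j) := by
    intro j
    have hlow : (0:ℝ) < D * q ^ (j+1) := by positivity
    have h2 : σ (A j) ≤ ENNReal.ofReal (K * (D * q ^ j) ^ θ) := by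
      have hsubj : A j ⊆ {z | z ∈ B ∧ g z < D * q ^ j} := by
        rintro z ⟨hzB, _, hz2⟩; exact ⟨hzB, hz2⟩
      have hle : D * q ^ j ≤ D := by
        nlinarith [pow_le_one₀ hq0.le hq1.le (n := j), pow_pos hq0 j]
      exact le_trans (measure_mono hsubj) (hmeas _ (by positivity) hle)
    calc ∫⁻ z in A j, f z ∂σ ≤ ∫⁻ _ in A j, ENNReal.ofReal ((D * q ^ (j+1)) ^ (-a)) ∂σ := by
          apply setLIntegral_mono measurable_const
          rintro z ⟨_, hz1, _⟩
          exact ENNReal.ofReal_le_ofReal (Real.rpow_le_rpow_of_nonpos hlow hz1 (by linarith))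
    _ = ENNReal.ofReal ((D * q ^ (j+1)) ^ (-a)) * σ (A j) := setLIntegral_const _ _
    _ ≤ ENNReal.ofReal ((D * q ^ (j+1)) ^ (-a)) * ENNReal.ofReal (K * (D * q ^ j) ^ θ) := by
        gcongr
    _ = ENNReal.ofReal ((K * D ^ (θ - a) * (2:ℝ) ^ a) * ρ ^ j) := by
        rw [← ENNReal.ofReal_mul (by positivity), hterm j]
  have hsum : (∑' j : ℕ, ENNReal.ofReal ((K * D ^ (θ - a) * (2:ℝ) ^ a) * ρ ^ j))
      = ENNReal.ofReal ((K * D ^ (θ - a) * (2:ℝ) ^ a) * (1 - ρ)⁻¹) := by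
    rw [← ENNReal.ofReal_tsum_of_nonneg (fun j => by positivity)
      ((summable_geometric_of_lt_one hρ0.le hρ1).mul_left _), tsum_mul_left,
      tsum_geometric_of_lt_one hρ0.le hρ1]
  calc ∫⁻ z in B, f z ∂σ ≤ ∫⁻ z in Atop ∪ ((⋃ j, A j) ∪ N), f z ∂σ :=
        lintegral_mono_set hsub
  _ ≤ (∫⁻ z in Atop, f z ∂σ) + ∫⁻ z in (⋃ j, A j) ∪ N, f z ∂σ := lintegral_union_le _ _ _
  _ ≤ (∫⁻ z in Atop, f z ∂σ) + ((∫⁻ z in ⋃ j, A j, f z ∂σ) + ∫⁻ z in N, f z ∂σ) := by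
      gcongr
      exact lintegral_union_le _ _ _
  _ ≤ ENNReal.ofReal (K * D ^ (θ - a)) +
      (ENNReal.ofReal ((K * D ^ (θ - a) * (2:ℝ) ^ a) * (1 - ρ)⁻¹) + 0) := by
      refine add_le_add htop (add_le_add ?_ ?_)
      · calc ∫⁻ z in ⋃ j, A j, f z ∂σ ≤ ∑' j, ∫⁻ z in A j, f z ∂σ := lintegral_iUnion_le _ _
        _ ≤ ∑' j, ENNReal.ofReal ((K * D ^ (θ - a) * (2:ℝ) ^ a) * ρ ^ j) :=
            ENNReal.tsum_le_tsum hAj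
        _ = _ := hsum
      · exact le_of_eq (setLIntegral_measure_zero _ _ hN)
  _ = ENNReal.ofReal (K * D ^ (θ - a) * ((2:ℝ) ^ a * (1 - ρ)⁻¹ + 1)) := by
      rw [add_zero, ← ENNReal.ofReal_add (by positivity)]
      · congr 1; ring
      · have h1ρ : (0:ℝ) < 1 - ρ := by linarith
        positivity

lemma meas_sublevel [MeasurableSpace (EuclideanSpace ℂ (Fin n))]
    (σ : Measure (EuclideanSpace ℂ (Fin n))) (C c₂ s : ℝ) (hC : 0 < C) (hc₂ : 0 < c₂)
    (E : Set (EuclideanSpace ℂ (Fin n))) (hEne : E.Nonempty)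
    (hES : E ⊆ sphere (0 : EuclideanSpace ℂ (Fin n)) 1)
    (hσhigh : ∀ ξ ∈ sphere (0 : EuclideanSpace ℂ (Fin n)) 1, ∀ R : ℝ, 0 < R → R ≤ 1 →
      σ (pball ξ R) ≤ ENNReal.ofReal (c₂ * R ^ (n : ℝ)))
    (hdim : ∀ ξ ∈ sphere (0 : EuclideanSpace ℂ (Fin n)) 1, ∀ R k : ℝ,
      1 ≤ k → 0 < R → k * R ≤ 1 →
      ∀ T : Finset (EuclideanSpace ℂ (Fin n)), (↑T : Set _) ⊆ pball ξ (k * R) →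
        (∀ p ∈ T, ∀ w ∈ T, p ≠ w → R ≤ dd p w) → (T.card : ℝ) ≤ C * k ^ s)
    (ξ : EuclideanSpace ℂ (Fin n)) (hξ : ξ ∈ sphere (0 : EuclideanSpace ℂ (Fin n)) 1)
    (R t : ℝ) (ht : 0 < t) (htR : t ≤ R) (hR6 : 6 * R ≤ 1) :
    σ {z | z ∈ pball ξ R ∧ sInf (dd z '' E) < t} ≤
      ENNReal.ofReal ((C * c₂ * 6 ^ (n:ℝ)) * (6 * R) ^ s * t ^ ((n:ℝ) - s)) := by
  have hR : 0 < R := lt_of_lt_of_le ht htR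
  have hξ1 : ‖ξ‖ = 1 := by simpa using hξ
  set P : Set (EuclideanSpace ℂ (Fin n)) := E ∩ pball ξ (6 * R) with hPdef
  have hcard : ∀ T : Finset (EuclideanSpace ℂ (Fin n)), (↑T : Set _) ⊆ P →
      (∀ p ∈ T, ∀ q ∈ T, p ≠ q → t ≤ dd p q) → (T.card : ℝ) ≤ C * (6 * R / t) ^ s := by
    intro T hT1 hT2
    have hk1 : (1:ℝ) ≤ 6 * R / t := by
      rw [le_div_iff₀ ht]; linarith
    have hkt : (6 * R / t) * t = 6 * R := div_mul_cancel₀ _ (ne_of_gt ht)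
    apply hdim ξ hξ t (6 * R / t) hk1 ht (by rw [hkt]; exact hR6)
    · rw [hkt]
      exact fun z hz => (hT1 hz).2
    · exact hT2
  have hPself : ∀ w ∈ P, dd w w < t := by
    intro w hw
    rw [dd_self (by simpa using hES hw.1)]
    exact ht
  have hNb : ∀ T : Finset (EuclideanSpace ℂ (Fin n)), (↑T : Set _) ⊆ P →
      (∀ p ∈ T, ∀ q ∈ T, p ≠ q → t ≤ dd p q) → T.card ≤ ⌊C * (6 * R / t) ^ s⌋₊ :=
    fun T h1 h2 => Nat.le_floor (by exact_mod_cast hcard T h1 h2)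
  obtain ⟨T, hT1, hT2, hT3⟩ := exists_maximal_sep P t hPself _ hNb
  have hincl : {z | z ∈ pball ξ R ∧ sInf (dd z '' E) < t} ⊆ ⋃ p ∈ T, pball p (6 * t) := by
    rintro z ⟨⟨hzS, hzξ⟩, hzd⟩
    have hz1 : ‖z‖ = 1 := by simpa using hzS
    obtain ⟨y, ⟨w, hwE, rfl⟩, hyt⟩ := exists_lt_of_csInf_lt (hEne.image _) hzd
    have hw1 : ‖w‖ = 1 := by simpa using hES hwE
    have hwP : w ∈ P := by
      refine ⟨hwE, hES hwE, ?_⟩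
      calc dd w ξ ≤ 3 * (dd w z + dd z ξ) := dd_quasi hw1 hz1 hξ1
      _ < 3 * (t + R) := by rw [dd_comm w z]; gcongr
      _ ≤ 6 * R := by linarith
    obtain ⟨p, hpT, hwp⟩ := hT3 w hwP
    have hp1 : ‖p‖ = 1 := by simpa using hES (hT1 hpT).1
    refine Set.mem_biUnion hpT ⟨hzS, ?_⟩
    calc dd z p ≤ 3 * (dd z w + dd w p) := dd_quasi hz1 hw1 hp1
    _ < 3 * (t + t) := by gcongr
    _ = 6 * t := by ring
  have h6t : 0 < 6 * t := by linarith
  have h6t1 : 6 * t ≤ 1 := by linarith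
  calc σ {z | z ∈ pball ξ R ∧ sInf (dd z '' E) < t}
      ≤ σ (⋃ p ∈ T, pball p (6 * t)) := measure_mono hincl
  _ ≤ ∑ p ∈ T, σ (pball p (6 * t)) := measure_biUnion_finset_le _ _
  _ ≤ ∑ _p ∈ T, ENNReal.ofReal (c₂ * (6 * t) ^ (n:ℝ)) := by
      apply Finset.sum_le_sum
      intro p hp
      exact hσhigh p (hES (hT1 hp).1) (6 * t) h6t h6t1
  _ = (T.card : ℝ≥0∞) * ENNReal.ofReal (c₂ * (6 * t) ^ (n:ℝ)) := by
      rw [Finset.sum_const, nsmul_eq_mul]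
  _ ≤ ENNReal.ofReal (C * (6 * R / t) ^ s) * ENNReal.ofReal (c₂ * (6 * t) ^ (n:ℝ)) := by
      gcongr
      rw [← ENNReal.ofReal_natCast]
      exact ENNReal.ofReal_le_ofReal (hcard T hT1 hT2)
  _ = ENNReal.ofReal ((C * (6 * R / t) ^ s) * (c₂ * (6 * t) ^ (n:ℝ))) := by
      rw [← ENNReal.ofReal_mul (by positivity)]
  _ = ENNReal.ofReal ((C * c₂ * 6 ^ (n:ℝ)) * (6 * R) ^ s * t ^ ((n:ℝ) - s)) := by
      congr 1
      rw [Real.div_rpow (by linarith) ht.le, Real.mul_rpow (by norm_num) ht.le,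
        show (n:ℝ) - s = (n:ℝ) + (-s) by ring, Real.rpow_add ht, Real.rpow_neg ht.le,
        div_eq_mul_inv]
      ring

end Aux

set_option maxHeartbeats 2000000 in
/-- If `E ⊆ S` is a closed subset of the unit sphere of `ℂⁿ` whose upper dimension (for
the pseudometric `d(z,w) = |1 - z·w̄|`) is at most `s < n`, i.e. any `R`-separated subset
of a pseudoball `B(ξ,kR)` has at most `C k^s` points, and `σ` is the surface measure on
`S` (so `σ(B(ξ,R)) ≈ R^n`), then for `0 < a < n - s` and every `ζ ∈ E` and `R > 0`,
`∫_{B(ζ,R)} d(z,E)^{-a} dσ(z) ≤ C' R^{n-a}`. -/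
theorem integral_dist_neg_pow_bound {n : ℕ} (s a : ℝ) (hs : s < n) (ha : 0 < a)
    (han : a < n - s)
    [MeasurableSpace (EuclideanSpace ℂ (Fin n))] [BorelSpace (EuclideanSpace ℂ (Fin n))]
    (C c₁ c₂ : ℝ) (hC : 0 < C) (hc₁ : 0 < c₁) (hc₂ : 0 < c₂)
    (σ : Measure (EuclideanSpace ℂ (Fin n))) [IsFiniteMeasure σ]
    (E : Set (EuclideanSpace ℂ (Fin n))) (hEcl : IsClosed E) (hEne : E.Nonempty)
    (hES : E ⊆ sphere (0 : EuclideanSpace ℂ (Fin n)) 1)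
    (hσlow : ∀ ξ ∈ sphere (0 : EuclideanSpace ℂ (Fin n)) 1, ∀ R : ℝ, 0 < R → R ≤ 1 →
      ENNReal.ofReal (c₁ * R ^ (n : ℝ)) ≤ σ (pball ξ R))
    (hσhigh : ∀ ξ ∈ sphere (0 : EuclideanSpace ℂ (Fin n)) 1, ∀ R : ℝ, 0 < R → R ≤ 1 →
      σ (pball ξ R) ≤ ENNReal.ofReal (c₂ * R ^ (n : ℝ)))
    (hdim : ∀ ξ ∈ sphere (0 : EuclideanSpace ℂ (Fin n)) 1, ∀ R k : ℝ,
      1 ≤ k → 0 < R → k * R ≤ 1 →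
      ∀ T : Finset (EuclideanSpace ℂ (Fin n)), (↑T : Set _) ⊆ pball ξ (k * R) →
        (∀ p ∈ T, ∀ w ∈ T, p ≠ w → R ≤ dd p w) → (T.card : ℝ) ≤ C * k ^ s) :
    ∃ C' > (0 : ℝ), ∀ ζ ∈ E, ∀ R : ℝ, 0 < R →
      ∫ z in pball ζ R, sInf (dd z '' E) ^ (-a) ∂σ ≤ C' * R ^ ((n : ℝ) - a) := by
  classical
  obtain ⟨ζ₀, hζ₀E⟩ := hEne
  have hζ₀S : ζ₀ ∈ sphere (0 : EuclideanSpace ℂ (Fin n)) 1 := hES hζ₀E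
  have hζ₀1 : ‖ζ₀‖ = 1 := by simpa using hζ₀S
  -- C ≥ 1
  have hC1 : (1:ℝ) ≤ C := by
    have h := hdim ζ₀ hζ₀S 1 1 le_rfl one_pos (by norm_num) {ζ₀}
      (by
        intro z hz
        simp only [Finset.coe_singleton, Set.mem_singleton_iff] at hz
        subst hz
        exact ⟨hζ₀S, by rw [one_mul, dd_self hζ₀1]; norm_num⟩)
      (by
        intro p hp q hq hpq
        simp only [Finset.mem_singleton] at hp hq
        subst hp; subst hq; exact absurd rfl hpq)
    simpa [Real.one_rpow] using h
  -- s ≥ 0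
  have hs0 : (0:ℝ) ≤ s := by
    by_contra hneg
    push_neg at hneg
    set k : ℝ := (C + 1) ^ (1 / (-s)) with hkdef
    have hk1 : (1:ℝ) ≤ k := Real.one_le_rpow (by linarith) (div_nonneg zero_le_one (by linarith))
    have hk0 : (0:ℝ) < k := by linarith
    have hks : k ^ s = (C + 1)⁻¹ := by
      rw [hkdef, ← Real.rpow_mul (by linarith),
        show (1 / (-s)) * s = -1 by
          rw [div_mul_eq_mul_div, one_mul, div_neg, div_self (ne_of_lt hneg)],
        Real.rpow_neg_one]
    have hkk : k * k⁻¹ = 1 := mul_inv_cancel₀ (ne_of_gt hk0)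
    have h := hdim ζ₀ hζ₀S k⁻¹ k hk1 (by positivity) (by rw [hkk]) {ζ₀}
      (by
        intro z hz
        simp only [Finset.coe_singleton, Set.mem_singleton_iff] at hz
        subst hz
        exact ⟨hζ₀S, by rw [hkk, dd_self hζ₀1]; norm_num⟩)
      (by
        intro p hp q hq hpq
        simp only [Finset.mem_singleton] at hp hq
        subst hp; subst hq; exact absurd rfl hpq)
    rw [hks] at h
    simp only [Finset.card_singleton, Nat.cast_one] at h
    have hlt : C * (C + 1)⁻¹ < 1 := by
      rw [mul_inv_lt_iff₀ (by linarith)]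
      linarith
    linarith
  have hna : (0:ℝ) < (n:ℝ) - a := by linarith
  have hθa : a < (n:ℝ) - s := han
  -- the distance function
  set dE : EuclideanSpace ℂ (Fin n) → ℝ := fun z => sInf (dd z '' E) with hdEdef
  have hlip := distE_lip E ⟨ζ₀, hζ₀E⟩ hES
  have hdE0 : ∀ z, 0 ≤ dE z := fun z =>
    le_csInf ((Set.nonempty_of_mem hζ₀E).image _)
      (by rintro y ⟨w, _, rfl⟩; exact norm_nonneg _)
  set F : EuclideanSpace ℂ (Fin n) → ℝ := fun z => dE z ^ (-a) with hFdef
  have hF0 : ∀ z, 0 ≤ F z := fun z => Real.rpow_nonneg (hdE0 z) _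
  have hFm : Measurable F := by
    have hFeq : F = fun z => (dE z ^ a)⁻¹ := funext fun z => Real.rpow_neg (hdE0 z) a
    rw [hFeq]
    exact ((Real.continuous_rpow_const ha.le).measurable.comp
      hlip.continuous.measurable).inv
  -- geometric constant
  have hhalf1 : (1/2:ℝ) ^ ((n:ℝ) - s - a) < 1 :=
    Real.rpow_lt_one (by norm_num) (by norm_num) (by linarith)
  have hhalf0 : (0:ℝ) < (1/2:ℝ) ^ ((n:ℝ) - s - a) := Real.rpow_pos_of_pos (by norm_num) _
  set CF : ℝ := (2:ℝ) ^ a * (1 - (1/2:ℝ) ^ ((n:ℝ) - s - a))⁻¹ + 1 with hCFdef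
  have hCF : 0 < CF := by
    have h1 : (0:ℝ) < 1 - (1/2:ℝ) ^ ((n:ℝ) - s - a) := by linarith
    positivity
  -- basic rpow facts
  have h6n : (1:ℝ) ≤ 6 ^ (n:ℝ) := Real.one_le_rpow (by norm_num) (Nat.cast_nonneg n)
  have h6s : (1:ℝ) ≤ 6 ^ s := Real.one_le_rpow (by norm_num) hs0
  have hbig : (1:ℝ) ≤ C * 6 ^ (n:ℝ) * 6 ^ s := by
    have h1 : (1:ℝ) * 1 ≤ C * 6 ^ (n:ℝ) := mul_le_mul hC1 h6n zero_le_one (by linarith)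
    have h2 : (1:ℝ) * 1 ≤ C * 6 ^ (n:ℝ) * 6 ^ s :=
      mul_le_mul (by linarith) h6s zero_le_one (by linarith)
    linarith
  -- the finite cover of the sphere
  obtain ⟨I, hIsub, hIcov⟩ := sphere_cover (n := n)
  set NN : ℝ := (I.card : ℝ) with hNNdef
  have hNN0 : 0 ≤ NN := Nat.cast_nonneg _
  -- global sublevel bound
  set K₂ : ℝ := NN * (C * c₂ * 6 ^ (n:ℝ)) with hK₂def
  have hK₂0 : 0 ≤ K₂ := by positivity
  have hglobal : ∀ t : ℝ, 0 < t → t ≤ 1/6 →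
      σ {z | z ∈ sphere (0 : EuclideanSpace ℂ (Fin n)) 1 ∧ dE z < t} ≤
        ENNReal.ofReal (K₂ * t ^ ((n:ℝ) - s)) := by
    intro t ht ht6
    have hone : (6 * (1/6 : ℝ)) ^ s = 1 := by norm_num
    have hincl : {z | z ∈ sphere (0 : EuclideanSpace ℂ (Fin n)) 1 ∧ dE z < t} ⊆
        ⋃ ξ ∈ I, {z | z ∈ pball ξ (1/6) ∧ sInf (dd z '' E) < t} := by
      rintro z ⟨hzS, hzd⟩
      obtain ⟨ξ, hξI, hzξ⟩ := Set.mem_iUnion₂.1 (hIcov hzS)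
      exact Set.mem_biUnion hξI ⟨hzξ, hzd⟩
    calc σ {z | z ∈ sphere (0 : EuclideanSpace ℂ (Fin n)) 1 ∧ dE z < t}
        ≤ σ (⋃ ξ ∈ I, {z | z ∈ pball ξ (1/6) ∧ sInf (dd z '' E) < t}) := measure_mono hincl
    _ ≤ ∑ ξ ∈ I, σ {z | z ∈ pball ξ (1/6) ∧ sInf (dd z '' E) < t} :=
        measure_biUnion_finset_le _ _
    _ ≤ ∑ _ξ ∈ I, ENNReal.ofReal ((C * c₂ * 6 ^ (n:ℝ)) * (6 * (1/6:ℝ)) ^ s * t ^ ((n:ℝ) - s)) := by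
        apply Finset.sum_le_sum
        intro ξ hξI
        exact meas_sublevel σ C c₂ s hC hc₂ E ⟨ζ₀, hζ₀E⟩ hES hσhigh hdim ξ (hIsub hξI)
          (1/6) t ht ht6 (by norm_num)
    _ = (I.card : ℝ≥0∞) * ENNReal.ofReal ((C * c₂ * 6 ^ (n:ℝ)) * t ^ ((n:ℝ) - s)) := by
        rw [Finset.sum_const, nsmul_eq_mul, hone, mul_one]
    _ = ENNReal.ofReal (K₂ * t ^ ((n:ℝ) - s)) := by
        rw [← ENNReal.ofReal_natCast, ← ENNReal.ofReal_mul (Nat.cast_nonneg _), hK₂def, hNNdef]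
        congr 1
        ring
  -- global measure bound
  have hsphere : σ (sphere (0 : EuclideanSpace ℂ (Fin n)) 1) ≤
      ENNReal.ofReal (K₂ * (1/6:ℝ) ^ ((n:ℝ) - s)) := by
    have h1 : σ (sphere (0 : EuclideanSpace ℂ (Fin n)) 1) ≤
        ENNReal.ofReal (NN * (c₂ * (1/6:ℝ) ^ (n:ℝ))) := by
      calc σ (sphere (0 : EuclideanSpace ℂ (Fin n)) 1) ≤ σ (⋃ ξ ∈ I, pball ξ (1/6)) :=
            measure_mono hIcov
      _ ≤ ∑ ξ ∈ I, σ (pball ξ (1/6)) := measure_biUnion_finset_le _ _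
      _ ≤ ∑ _ξ ∈ I, ENNReal.ofReal (c₂ * (1/6:ℝ) ^ (n:ℝ)) := by
          apply Finset.sum_le_sum
          intro ξ hξI
          exact hσhigh ξ (hIsub hξI) (1/6) (by norm_num) (by norm_num)
      _ = (I.card : ℝ≥0∞) * ENNReal.ofReal (c₂ * (1/6:ℝ) ^ (n:ℝ)) := by
          rw [Finset.sum_const, nsmul_eq_mul]
      _ = ENNReal.ofReal (NN * (c₂ * (1/6:ℝ) ^ (n:ℝ))) := by
          rw [← ENNReal.ofReal_natCast, ← ENNReal.ofReal_mul (Nat.cast_nonneg _), hNNdef]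
    refine le_trans h1 (ENNReal.ofReal_le_ofReal ?_)
    have e2 : (1/6:ℝ) ^ (-s) = 6 ^ s := by
      rw [show (1/6:ℝ) = 6⁻¹ by norm_num, Real.inv_rpow (by norm_num),
        Real.rpow_neg (by norm_num), inv_inv]
    have e1 : (1/6:ℝ) ^ ((n:ℝ) - s) = (1/6:ℝ) ^ (n:ℝ) * 6 ^ s := by
      rw [show (n:ℝ) - s = (n:ℝ) + (-s) by ring, Real.rpow_add (by norm_num), e2]
    rw [hK₂def, e1]
    have hpos : (0:ℝ) < (1/6:ℝ) ^ (n:ℝ) := Real.rpow_pos_of_pos (by norm_num) _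
    have key := mul_le_mul_of_nonneg_left hbig
      (mul_nonneg hNN0 (mul_nonneg hc₂.le hpos.le))
    nlinarith [key]
  -- case 1 : R ≤ 1/6
  set C₁ : ℝ := C * c₂ * 6 ^ (n:ℝ) * 6 ^ s * CF with hC₁def
  have hC₁0 : 0 < C₁ := by positivity
  have case1 : ∀ ζ ∈ E, ∀ R : ℝ, 0 < R → R ≤ 1/6 →
      ∫ z in pball ζ R, F z ∂σ ≤ C₁ * R ^ ((n:ℝ) - a) := by
    intro ζ hζE R hR0 hR6
    set K : ℝ := (C * c₂ * 6 ^ (n:ℝ)) * (6 * R) ^ s with hKdef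
    have hK0 : 0 ≤ K := by positivity
    have hζS : ζ ∈ sphere (0 : EuclideanSpace ℂ (Fin n)) 1 := hES hζE
    have hmeas : ∀ t : ℝ, 0 < t → t ≤ R →
        σ {z | z ∈ pball ζ R ∧ dE z < t} ≤ ENNReal.ofReal (K * t ^ ((n:ℝ) - s)) :=
      fun t ht htR => meas_sublevel σ C c₂ s hC hc₂ E ⟨ζ₀, hζ₀E⟩ hES hσhigh hdim ζ hζS
        R t ht htR (by linarith)
    have hRn : R ^ s * R ^ ((n:ℝ) - s) = R ^ (n:ℝ) := by
      rw [← Real.rpow_add hR0]; ring_nf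
    have h6R : (6 * R) ^ s = 6 ^ s * R ^ s := Real.mul_rpow (by norm_num) hR0.le
    have hσB : σ (pball ζ R) ≤ ENNReal.ofReal (K * R ^ ((n:ℝ) - s)) := by
      refine le_trans (hσhigh ζ hζS R hR0 (by linarith)) (ENNReal.ofReal_le_ofReal ?_)
      rw [hKdef, h6R]
      have h1 : C * c₂ * 6 ^ (n:ℝ) * (6 ^ s * R ^ s) * R ^ ((n:ℝ) - s)
          = (C * 6 ^ (n:ℝ) * 6 ^ s) * (c₂ * (R ^ s * R ^ ((n:ℝ) - s))) := by ring
      rw [h1, hRn]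
      have hRn0 : 0 < R ^ (n:ℝ) := Real.rpow_pos_of_pos hR0 _
      have key := mul_le_mul_of_nonneg_left hbig (mul_nonneg hc₂.le hRn0.le)
      nlinarith [key]
    have hlint := dyadic_bound σ (pball ζ R) dE a ((n:ℝ) - s) K R ha hθa hK0 hR0 hmeas hσB
    have hMeq : K * R ^ ((n:ℝ) - s - a) * ((2:ℝ) ^ a * (1 - (1/2:ℝ) ^ ((n:ℝ) - s - a))⁻¹ + 1)
        = C₁ * R ^ ((n:ℝ) - a) := by
      rw [hC₁def, hKdef, h6R, hCFdef]
      have h2 : R ^ s * R ^ ((n:ℝ) - s - a) = R ^ ((n:ℝ) - a) := by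
        rw [← Real.rpow_add hR0]; ring_nf
      calc (C * c₂ * 6 ^ (n:ℝ)) * (6 ^ s * R ^ s) * R ^ ((n:ℝ) - s - a) *
            ((2:ℝ) ^ a * (1 - (1/2:ℝ) ^ ((n:ℝ) - s - a))⁻¹ + 1)
          = C * c₂ * 6 ^ (n:ℝ) * 6 ^ s * ((2:ℝ) ^ a * (1 - (1/2:ℝ) ^ ((n:ℝ) - s - a))⁻¹ + 1)
            * (R ^ s * R ^ ((n:ℝ) - s - a)) := by ring
      _ = _ := by rw [h2]
    apply integral_le_of_lintegral_le σ (pball ζ R) F hF0 hFm.aestronglyMeasurable _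
      (by positivity)
    rw [← hMeq]
    exact hlint
  -- case 2 : R > 1/6
  set M₂ : ℝ := K₂ * (1/6:ℝ) ^ ((n:ℝ) - s - a) * CF with hM₂def
  have hM₂0 : 0 ≤ M₂ := by positivity
  set C₂ : ℝ := M₂ * 6 ^ ((n:ℝ) - a) with hC₂def
  have hC₂0 : 0 ≤ C₂ := by positivity
  have case2 : ∀ ζ ∈ E, ∀ R : ℝ, 1/6 < R →
      ∫ z in pball ζ R, F z ∂σ ≤ C₂ * R ^ ((n:ℝ) - a) := by
    intro ζ hζE R hR6
    have hR0 : 0 < R := lt_trans (by norm_num) hR6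
    have hlint := dyadic_bound σ (sphere (0 : EuclideanSpace ℂ (Fin n)) 1) dE a
      ((n:ℝ) - s) K₂ (1/6) ha hθa hK₂0 (by norm_num) hglobal hsphere
    have hsub : pball ζ R ⊆ sphere (0 : EuclideanSpace ℂ (Fin n)) 1 := fun z hz => hz.1
    have hlint2 : ∫⁻ z in pball ζ R, ENNReal.ofReal (F z) ∂σ ≤ ENNReal.ofReal M₂ :=
      le_trans (lintegral_mono_set hsub) hlint
    have hint : ∫ z in pball ζ R, F z ∂σ ≤ M₂ :=
      integral_le_of_lintegral_le σ (pball ζ R) F hF0 hFm.aestronglyMeasurable _ hM₂0 hlint2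
    refine le_trans hint ?_
    have hRpow : (1/6:ℝ) ^ ((n:ℝ) - a) ≤ R ^ ((n:ℝ) - a) :=
      Real.rpow_le_rpow (by norm_num) hR6.le hna.le
    have h61 : (6:ℝ) ^ ((n:ℝ) - a) * (1/6:ℝ) ^ ((n:ℝ) - a) = 1 := by
      rw [← Real.mul_rpow (by norm_num) (by norm_num),
        show (6:ℝ) * (1/6) = 1 by norm_num, Real.one_rpow]
    calc M₂ = M₂ * ((6:ℝ) ^ ((n:ℝ) - a) * (1/6:ℝ) ^ ((n:ℝ) - a)) := by rw [h61, mul_one]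
    _ ≤ M₂ * ((6:ℝ) ^ ((n:ℝ) - a) * R ^ ((n:ℝ) - a)) := by
        have h6p : (0:ℝ) < (6:ℝ) ^ ((n:ℝ) - a) := Real.rpow_pos_of_pos (by norm_num) _
        nlinarith [mul_le_mul_of_nonneg_left hRpow h6p.le]
    _ = C₂ * R ^ ((n:ℝ) - a) := by rw [hC₂def]; ring
  -- conclusion
  refine ⟨max C₁ C₂ + 1, by positivity, ?_⟩
  intro ζ hζE R hR0
  have hRpow0 : 0 ≤ R ^ ((n:ℝ) - a) := Real.rpow_nonneg hR0.le _
  rcases le_or_gt R (1/6) with hR6 | hR6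
  · refine le_trans (case1 ζ hζE R hR0 hR6) ?_
    apply mul_le_mul_of_nonneg_right _ hRpow0
    calc C₁ ≤ max C₁ C₂ := le_max_left _ _
    _ ≤ max C₁ C₂ + 1 := by linarith
  · refine le_trans (case2 ζ hζE R hR6) ?_
    apply mul_le_mul_of_nonneg_right _ hRpow0
    calc C₂ ≤ max C₁ C₂ := le_max_right _ _
    _ ≤ max C₁ C₂ + 1 := by linarith
end
end
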